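/- Let W be a Hermitian operator on ℂ^d that is not a real scalar multiple of the identity, and let ρ be a positive-definite density matrix on ℂ^d such that ρ ≠ e^{−βW}/Tr(e^{−βW}) for every β ≥ 0. Then there exist m ≥ 1 and a unitary U on (ℂ^d)^{⊗m} such that Tr(U ρ^{⊗m} U† W̄_m) < Tr(ρ^{⊗m} W̄_m), where W̄_m := Σ_{ℓ=0}^{m−1} I^{⊗ℓ} ⊗ W ⊗ I^{⊗(m−1−ℓ)}. That is, a nonzero amount of chemical work can be extracted from sufficiently many copies of any full-rank state that is not a thermal state of the payoff function W. -/

import Mathlib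

open Matrix BigOperators
open scoped ComplexOrder

/-- Functional calculus for a Hermitian matrix: apply `f` to the eigenvalues.
(Returns `0` if the matrix is not Hermitian.) -/
noncomputable def matFun {n : Type*} [Fintype n] [DecidableEq n]
    (f : ℝ → ℝ) (A : Matrix n n ℂ) : Matrix n n ℂ :=
  if hA : A.IsHermitian then
    (hA.eigenvectorUnitary : Matrix n n ℂ) *
      Matrix.diagonal (fun i => (f (hA.eigenvalues i) : ℂ)) *
      (star hA.eigenvectorUnitary : Matrix n n ℂ)
  else 0

/-- Spectral projector of a Hermitian matrix onto the direct sum of the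
eigenspaces with eigenvalue in the closed interval `[a, b]`. -/
noncomputable def specProj {n : Type*} [Fintype n] [DecidableEq n]
    (A : Matrix n n ℂ) (a b : ℝ) : Matrix n n ℂ :=
  matFun (Set.indicator (Set.Icc a b) fun _ => (1 : ℝ)) A

/-- Largest eigenvalue of a Hermitian matrix. -/
noncomputable def eigMax {n : Type*} [Fintype n] [DecidableEq n]
    (A : Matrix n n ℂ) : ℝ :=
  if hA : A.IsHermitian then ⨆ i, hA.eigenvalues i else 0

/-- Smallest eigenvalue of a Hermitian matrix. -/
noncomputable def eigMin {n : Type*} [Fintype n] [DecidableEq n]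
    (A : Matrix n n ℂ) : ℝ :=
  if hA : A.IsHermitian then ⨅ i, hA.eigenvalues i else 0

/-- Spectral diameter `Σ(A) = λ_max(A) - λ_min(A)` of a Hermitian matrix. -/
noncomputable def specDiam {n : Type*} [Fintype n] [DecidableEq n]
    (A : Matrix n n ℂ) : ℝ :=
  eigMax A - eigMin A

/-- Operator norm `‖A‖_∞` of a Hermitian matrix: the largest absolute value
of an eigenvalue. -/
noncomputable def opNorm {n : Type*} [Fintype n] [DecidableEq n]
    (A : Matrix n n ℂ) : ℝ :=
  if hA : A.IsHermitian then ⨆ i, |hA.eigenvalues i| else 0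

/-- The single-site operator `I^{⊗ℓ} ⊗ Q ⊗ I^{⊗(N-1-ℓ)}` on `(ℂ^d)^{⊗N}`. -/
noncomputable def siteOp {d : ℕ} (Q : Matrix (Fin d) (Fin d) ℂ) (N : ℕ) (ℓ : Fin N) :
    Matrix (Fin N → Fin d) (Fin N → Fin d) ℂ :=
  Matrix.of fun x y =>
    (∏ k ∈ Finset.univ.erase ℓ, if x k = y k then (1 : ℂ) else 0) * Q (x ℓ) (y ℓ)

/-- The average operator `Q̄ := (1/N) Σ_ℓ I^{⊗ℓ} ⊗ Q ⊗ I^{⊗(N-1-ℓ)}` on `(ℂ^d)^{⊗N}`. -/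
noncomputable def avgOp {d : ℕ} (Q : Matrix (Fin d) (Fin d) ℂ) (N : ℕ) :
    Matrix (Fin N → Fin d) (Fin N → Fin d) ℂ :=
  (N : ℂ)⁻¹ • ∑ ℓ : Fin N, siteOp Q N ℓ

/-- The `N`-fold tensor power `ρ^{⊗N}` on `(ℂ^d)^{⊗N}`. -/
noncomputable def tensorPow {d : ℕ} (ρ : Matrix (Fin d) (Fin d) ℂ) (N : ℕ) :
    Matrix (Fin N → Fin d) (Fin N → Fin d) ℂ :=
  Matrix.of fun x y => ∏ ℓ, ρ (x ℓ) (y ℓ)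

/-- The reduced state on the `ℓ`-th tensor factor: partial trace over all
tensor factors except the `ℓ`-th. -/
noncomputable def reduceAt {d N : ℕ}
    (Ω : Matrix (Fin N → Fin d) (Fin N → Fin d) ℂ) (ℓ : Fin N) :
    Matrix (Fin d) (Fin d) ℂ :=
  Matrix.of fun a b =>
    ∑ x ∈ Finset.univ.filter (fun x : Fin N → Fin d => x ℓ = a),
      Ω x (Function.update x ℓ b)

/-- Quantum relative entropy `D(ρ‖σ) = Tr(ρ (log ρ - log σ))`, with the
convention `log 0 = 0` (so `0 log 0 = 0` on the kernel of `ρ`). -/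
noncomputable def relEnt {n : Type*} [Fintype n] [DecidableEq n]
    (ρ σ : Matrix n n ℂ) : ℝ :=
  (Matrix.trace (ρ * (matFun Real.log ρ - matFun Real.log σ))).re

/-- Trace norm `‖A‖₁ = Tr √(AᴴA)`. -/
noncomputable def traceNorm {n : Type*} [Fintype n] [DecidableEq n]
    (A : Matrix n n ℂ) : ℝ :=
  (Matrix.trace
    ((Matrix.posSemidef_conjTranspose_mul_self A).1.eigenvectorUnitary.1 *
      Matrix.diagonal (((↑) : ℝ → ℂ) ∘ Real.sqrt ∘ (Matrix.posSemidef_conjTranspose_mul_self A).1.eigenvalues) *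
      (star (Matrix.posSemidef_conjTranspose_mul_self A).1.eigenvectorUnitary : Matrix n n ℂ))).re

/-- Matrix exponential, defined by the power series. -/
noncomputable def matExp {n : Type*} [Fintype n] [DecidableEq n]
    (A : Matrix n n ℂ) : Matrix n n ℂ :=
  ∑' k : ℕ, ((k.factorial : ℂ)⁻¹) • A ^ k

/-!
Suppose no unitary lowers the energy of any number of copies. Let `p`, `w` be the spectra of `ρ`
and `W`. Unitaries taking the eigenbasis of `ρ^{⊗m}` to a permutation of the eigenbasis of `W̄_m`
turn this into inequalities between populations and energies of words. By Birkhoff's theorem a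
permutation `σ` puts the diagonal state `r = p ∘ σ⁻¹` no higher in energy than `ρ`; swapping the
populations of two words then shows `r` is passive on every tensor power. Comparing the two-letter
words `k^s j'^t` and `j^s k'^t` for all `s, t` makes `log r` affine in `w` with nonpositive slope,
so `r` is a Gibbs distribution at some `β ≥ 0`. Then the one-copy energy of `ρ` equals that of
`r`, and the equality case of `x log x ≥ x - 1`, applied to the doubly stochastic overlap
`|⟨eᵢ(ρ), eⱼ(W)⟩|²` of the two eigenbases, forces `ρ` to be diagonal in the eigenbasis of `W`
with populations `r`: `ρ` is thermal.
-/

namespace Matrix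

variable {ι n R : Type*} [Fintype ι]

def piKronecker [CommSemiring R] (f : ι → Matrix n n R) : Matrix (ι → n) (ι → n) R :=
  of fun x y => ∏ k, f k (x k) (y k)

section CommSemiring

variable [CommSemiring R]

theorem piKronecker_mul [DecidableEq ι] [Fintype n] (f g : ι → Matrix n n R) :
    piKronecker f * piKronecker g = piKronecker (f * g) := by
  ext x y
  simp only [piKronecker, mul_apply, of_apply, Pi.mul_apply]
  rw [Fintype.prod_sum fun k j => f k (x k) j * g k j (y k)]
  simp_rw [Finset.prod_mul_distrib]

theorem piKronecker_diagonal [DecidableEq n] (v : ι → n → R) :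
    piKronecker (fun k => diagonal (v k)) = diagonal fun x => ∏ k, v k (x k) := by
  ext x y
  by_cases hxy : x = y
  · subst hxy
    simp [piKronecker]
  · obtain ⟨k, hk⟩ := Function.ne_iff.mp hxy
    rw [diagonal_apply_ne _ hxy]
    exact Finset.prod_eq_zero (Finset.mem_univ k) (diagonal_apply_ne _ hk)

theorem piKronecker_one [DecidableEq n] : piKronecker (fun _ : ι => (1 : Matrix n n R)) = 1 := by
  simpa using piKronecker_diagonal (fun (_ : ι) (_ : n) => (1 : R))

theorem trace_piKronecker [DecidableEq ι] [Fintype n] (f : ι → Matrix n n R) :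
    trace (piKronecker f) = ∏ k, trace (f k) := by
  simp only [trace, diag_apply, piKronecker, of_apply]
  exact (Fintype.prod_sum fun k i => f k i i).symm

variable [StarRing R]

theorem conjTranspose_piKronecker (f : ι → Matrix n n R) :
    (piKronecker f)ᴴ = piKronecker fun k => (f k)ᴴ := by
  ext x y
  simp only [piKronecker, conjTranspose_apply, of_apply]
  exact star_prod _ _

theorem piKronecker_conj [DecidableEq ι] [Fintype n] (V f : ι → Matrix n n R) :
    piKronecker (fun k => V k * f k * (V k)ᴴ) =
      piKronecker V * piKronecker f * (piKronecker V)ᴴ := by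
  rw [conjTranspose_piKronecker, piKronecker_mul, piKronecker_mul]
  rfl

end CommSemiring

section Unitary

variable [Fintype n] [DecidableEq n] [CommRing R] [StarRing R] {V : Matrix n n R}

theorem conjTranspose_mul_self_of_mem_unitaryGroup (hV : V ∈ unitaryGroup n R) : Vᴴ * V = 1 :=
  Unitary.star_mul_self_of_mem hV

theorem mul_conjTranspose_self_of_mem_unitaryGroup (hV : V ∈ unitaryGroup n R) : V * Vᴴ = 1 :=
  Unitary.mul_star_self_of_mem hV

theorem conjTranspose_mem_unitaryGroup (hV : V ∈ unitaryGroup n R) : Vᴴ ∈ unitaryGroup n R :=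
  Unitary.star_mem hV

theorem permMatrix_mem_unitaryGroup (σ : Equiv.Perm n) : σ.permMatrix R ∈ unitaryGroup n R := by
  rw [mem_unitaryGroup_iff, star_eq_conjTranspose, conjTranspose_permMatrix, ← permMatrix_mul,
    inv_mul_cancel, permMatrix_one]

theorem permMatrix_mul_diagonal_mul_conjTranspose (σ : Equiv.Perm n) (v : n → R) :
    σ.permMatrix R * diagonal v * (σ.permMatrix R)ᴴ = diagonal (v ∘ σ) := by
  rw [conjTranspose_permMatrix, PEquiv.toMatrix_toPEquiv_mul, PEquiv.mul_toMatrix_toPEquiv,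
    submatrix_submatrix]
  exact submatrix_diagonal_equiv v σ

theorem trace_conj_mul_conj (hV : V ∈ unitaryGroup n R) (A B : Matrix n n R) :
    trace (V * A * Vᴴ * (V * B * Vᴴ)) = trace (A * B) := by
  rw [show V * A * Vᴴ * (V * B * Vᴴ) = V * (A * (Vᴴ * V) * B) * Vᴴ by simp only [mul_assoc],
    conjTranspose_mul_self_of_mem_unitaryGroup hV, mul_one, trace_mul_cycle,
    conjTranspose_mul_self_of_mem_unitaryGroup hV, one_mul]

theorem piKronecker_mem_unitaryGroup [DecidableEq ι] {V : ι → Matrix n n R}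
    (hV : ∀ k, V k ∈ unitaryGroup n R) : piKronecker V ∈ unitaryGroup (ι → n) R := by
  rw [mem_unitaryGroup_iff, star_eq_conjTranspose, conjTranspose_piKronecker, piKronecker_mul,
    ← piKronecker_one]
  congr 1
  funext k
  exact mul_conjTranspose_self_of_mem_unitaryGroup (hV k)

end Unitary

namespace IsHermitian

variable [Fintype n] [DecidableEq n] {A : Matrix n n ℂ}

theorem eq_conj_diagonal (hA : A.IsHermitian) :
    A = (hA.eigenvectorUnitary : Matrix n n ℂ) * diagonal (fun i => (hA.eigenvalues i : ℂ)) *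
      (hA.eigenvectorUnitary : Matrix n n ℂ)ᴴ := by
  conv_lhs => rw [hA.spectral_theorem]
  simp [Unitary.conjStarAlgAut_apply, star_eq_conjTranspose, Function.comp_def]

theorem exists_eigenvalues_ne (hA : A.IsHermitian) (h : ¬ ∃ r : ℝ, A = (r : ℂ) • 1) :
    ∃ j k, hA.eigenvalues j ≠ hA.eigenvalues k := by
  by_contra! hconst
  rcases isEmpty_or_nonempty n with hn | ⟨⟨j₀⟩⟩
  · exact h ⟨0, Subsingleton.elim _ _⟩
  · refine h ⟨hA.eigenvalues j₀, ?_⟩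
    have hscalar : diagonal (fun i => (hA.eigenvalues i : ℂ)) = (hA.eigenvalues j₀ : ℂ) • 1 := by
      rw [smul_one_eq_diagonal]
      simp_rw [hconst _ j₀]
    conv_lhs => rw [hA.eq_conj_diagonal, hscalar]
    rw [Matrix.mul_smul, mul_one, smul_mul,
      mul_conjTranspose_self_of_mem_unitaryGroup hA.eigenvectorUnitary.2]

end IsHermitian

end Matrix

section TensorPower

variable {d m : ℕ}

theorem tensorPow_eq_piKronecker (ρ : Matrix (Fin d) (Fin d) ℂ) :
    tensorPow ρ m = piKronecker fun _ => ρ := rfl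

theorem siteOp_eq_piKronecker (Q : Matrix (Fin d) (Fin d) ℂ) (ℓ : Fin m) :
    siteOp Q m ℓ = piKronecker (Pi.mulSingle ℓ Q) := by
  ext x y
  simp only [siteOp, piKronecker, of_apply]
  rw [← Finset.prod_erase_mul _ _ (Finset.mem_univ ℓ), Pi.mulSingle_eq_same]
  congr 1
  refine Finset.prod_congr rfl fun k hk => ?_
  rw [Pi.mulSingle_eq_of_ne (Finset.ne_of_mem_erase hk), one_apply]

theorem tensorPow_mem_unitaryGroup {V : Matrix (Fin d) (Fin d) ℂ}
    (hV : V ∈ unitaryGroup (Fin d) ℂ) : tensorPow V m ∈ unitaryGroup (Fin m → Fin d) ℂ :=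
  piKronecker_mem_unitaryGroup fun _ => hV

theorem tensorPow_diagonal (p : Fin d → ℂ) :
    tensorPow (diagonal p) m = diagonal fun x => ∏ k, p (x k) :=
  piKronecker_diagonal _

theorem siteOp_diagonal (w : Fin d → ℂ) (ℓ : Fin m) :
    siteOp (diagonal w) m ℓ = diagonal fun x => w (x ℓ) := by
  have hsite : Pi.mulSingle ℓ (diagonal w) = fun k => diagonal (if k = ℓ then w else 1) := by
    funext k
    split_ifs with hk
    · rw [hk, Pi.mulSingle_eq_same]
    · simp [Pi.mulSingle_eq_of_ne hk]
  rw [siteOp_eq_piKronecker, hsite, piKronecker_diagonal]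
  congr 1
  funext x
  rw [Fintype.prod_eq_single ℓ fun k hk => by simp [hk]]
  simp

theorem tensorPow_conj (V Q : Matrix (Fin d) (Fin d) ℂ) :
    tensorPow (V * Q * Vᴴ) m = tensorPow V m * tensorPow Q m * (tensorPow V m)ᴴ :=
  piKronecker_conj _ _

theorem siteOp_conj {V : Matrix (Fin d) (Fin d) ℂ} (hV : V ∈ unitaryGroup (Fin d) ℂ)
    (Q : Matrix (Fin d) (Fin d) ℂ) (ℓ : Fin m) :
    siteOp (V * Q * Vᴴ) m ℓ = tensorPow V m * siteOp Q m ℓ * (tensorPow V m)ᴴ := by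
  rw [siteOp_eq_piKronecker, siteOp_eq_piKronecker, tensorPow_eq_piKronecker,
    ← piKronecker_conj]
  congr 1
  funext k
  by_cases hk : k = ℓ
  · subst hk
    simp
  · simp [Pi.mulSingle_eq_of_ne hk, mul_conjTranspose_self_of_mem_unitaryGroup hV]

theorem trace_tensorPow_mul_siteOp {ρ : Matrix (Fin d) (Fin d) ℂ} (hρ : trace ρ = 1)
    (W : Matrix (Fin d) (Fin d) ℂ) (ℓ : Fin m) :
    trace (tensorPow ρ m * siteOp W m ℓ) = trace (ρ * W) := by
  rw [tensorPow_eq_piKronecker, siteOp_eq_piKronecker, piKronecker_mul, trace_piKronecker,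
    Fintype.prod_eq_single ℓ fun k hk => by simp [Pi.mulSingle_eq_of_ne hk, hρ]]
  simp

theorem trace_tensorPow_mul_sum_siteOp {ρ : Matrix (Fin d) (Fin d) ℂ} (hρ : trace ρ = 1)
    (W : Matrix (Fin d) (Fin d) ℂ) :
    trace (tensorPow ρ m * ∑ ℓ, siteOp W m ℓ) = m * trace (ρ * W) := by
  simp [Finset.mul_sum, trace_sum, trace_tensorPow_mul_siteOp hρ]

theorem sum_siteOp_conj_diagonal {V : Matrix (Fin d) (Fin d) ℂ}
    (hV : V ∈ unitaryGroup (Fin d) ℂ) (w : Fin d → ℂ) :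
    ∑ ℓ : Fin m, siteOp (V * diagonal w * Vᴴ) m ℓ =
      tensorPow V m * diagonal (fun x => ∑ ℓ, w (x ℓ)) * (tensorPow V m)ᴴ := by
  simp_rw [siteOp_conj hV, siteOp_diagonal, ← Finset.sum_mul, ← Finset.mul_sum]
  congr 2
  ext x y
  by_cases hxy : x = y <;> simp [Matrix.sum_apply, hxy]

end TensorPower

section PermutedEigenbasis

open Equiv

variable {d m : ℕ} {V Vρ ρ W : Matrix (Fin d) (Fin d) ℂ}

theorem conj_permMatrix_tensorPow_conj_diagonal (hVρ : Vρ ∈ unitaryGroup (Fin d) ℂ)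
    (V : Matrix (Fin d) (Fin d) ℂ) (p : Fin d → ℂ) (e : Perm (Fin m → Fin d)) :
    tensorPow V m * e.permMatrix ℂ * (tensorPow Vρ m)ᴴ * tensorPow (Vρ * diagonal p * Vρᴴ) m *
        (tensorPow V m * e.permMatrix ℂ * (tensorPow Vρ m)ᴴ)ᴴ =
      tensorPow V m * diagonal (fun x => ∏ k, p (e x k)) * (tensorPow V m)ᴴ := by
  have hcancel (X : Matrix (Fin m → Fin d) (Fin m → Fin d) ℂ) :
      (tensorPow Vρ m)ᴴ * (tensorPow Vρ m * X) = X := by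
    rw [← mul_assoc, conjTranspose_mul_self_of_mem_unitaryGroup (tensorPow_mem_unitaryGroup hVρ),
      one_mul]
  rw [tensorPow_conj, tensorPow_diagonal, conjTranspose_mul, conjTranspose_mul,
    conjTranspose_conjTranspose,
    show (fun x => ∏ k, p (e x k)) = (fun x => ∏ k, p (x k)) ∘ e from rfl,
    ← permMatrix_mul_diagonal_mul_conjTranspose]
  simp only [mul_assoc, hcancel]

theorem re_trace_conj_permMatrix_tensorPow_mul_sum_siteOp (hV : V ∈ unitaryGroup (Fin d) ℂ)
    (hVρ : Vρ ∈ unitaryGroup (Fin d) ℂ) {p w : Fin d → ℝ}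
    (hρ : ρ = Vρ * diagonal (fun i => (p i : ℂ)) * Vρᴴ)
    (hW : W = V * diagonal (fun i => (w i : ℂ)) * Vᴴ) (e : Perm (Fin m → Fin d)) :
    (trace (tensorPow V m * e.permMatrix ℂ * (tensorPow Vρ m)ᴴ * tensorPow ρ m *
        (tensorPow V m * e.permMatrix ℂ * (tensorPow Vρ m)ᴴ)ᴴ * ∑ ℓ, siteOp W m ℓ)).re =
      ∑ x, (∏ k, p (e x k)) * ∑ ℓ, w (x ℓ) := by
  rw [hρ, hW, conj_permMatrix_tensorPow_conj_diagonal hVρ, sum_siteOp_conj_diagonal hV,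
    trace_conj_mul_conj (tensorPow_mem_unitaryGroup hV), diagonal_mul_diagonal,
    trace_diagonal]
  norm_cast

theorem mul_re_trace_le_sum_of_forall_unitary (hV : V ∈ unitaryGroup (Fin d) ℂ)
    (hVρ : Vρ ∈ unitaryGroup (Fin d) ℂ) {p w : Fin d → ℝ}
    (hρ : ρ = Vρ * diagonal (fun i => (p i : ℂ)) * Vρᴴ)
    (hW : W = V * diagonal (fun i => (w i : ℂ)) * Vᴴ) (hρ1 : trace ρ = 1)
    (h : ∀ U ∈ unitaryGroup (Fin m → Fin d) ℂ,
      (trace (tensorPow ρ m * ∑ ℓ, siteOp W m ℓ)).re ≤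
        (trace (U * tensorPow ρ m * Uᴴ * ∑ ℓ, siteOp W m ℓ)).re)
    (e : Perm (Fin m → Fin d)) :
    m * (trace (ρ * W)).re ≤ ∑ x, (∏ k, p (e x k)) * ∑ ℓ, w (x ℓ) := by
  have hU := Submonoid.mul_mem _ (Submonoid.mul_mem _ (tensorPow_mem_unitaryGroup hV)
    (permMatrix_mem_unitaryGroup e))
    (conjTranspose_mem_unitaryGroup (tensorPow_mem_unitaryGroup (m := m) hVρ))
  have := h _ hU
  rw [trace_tensorPow_mul_sum_siteOp hρ1,
    re_trace_conj_permMatrix_tensorPow_mul_sum_siteOp hV hVρ hρ hW] at this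
  simpa using this

end PermutedEigenbasis

section OneCopy

open Equiv Real

variable {n : Type*} [Fintype n] [DecidableEq n]

theorem re_trace_conj_diagonal_mul_conj_diagonal (V Vρ : Matrix n n ℂ) (p w : n → ℝ) :
    (trace (Vρ * diagonal (fun i => (p i : ℂ)) * Vρᴴ *
        (V * diagonal (fun j => (w j : ℂ)) * Vᴴ))).re =
      ∑ i, ∑ j, p i * Complex.normSq ((Vρᴴ * V) i j) * w j := by
  rw [show Vρ * diagonal (fun i => (p i : ℂ)) * Vρᴴ * (V * diagonal (fun j => (w j : ℂ)) * Vᴴ) =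
      Vρ * (diagonal (fun i => (p i : ℂ)) * (Vρᴴ * V) * diagonal (fun j => (w j : ℂ)) * Vᴴ) by
    simp only [mul_assoc], trace_mul_comm,
    show diagonal (fun i => (p i : ℂ)) * (Vρᴴ * V) * diagonal (fun j => (w j : ℂ)) * Vᴴ * Vρ =
      diagonal (fun i => (p i : ℂ)) * (Vρᴴ * V) * diagonal (fun j => (w j : ℂ)) * (Vρᴴ * V)ᴴ by
    simp [mul_assoc]]
  generalize Vρᴴ * V = C
  simp only [trace, diag_apply, mul_apply, diagonal_apply, ite_mul, mul_ite, zero_mul, mul_zero,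
    Finset.sum_ite_eq, Finset.sum_ite_eq', Finset.mem_univ, if_true, Complex.re_sum,
    conjTranspose_apply, Complex.star_def]
  refine Finset.sum_congr rfl fun i _ => Finset.sum_congr rfl fun j _ => ?_
  rw [mul_right_comm _ _ ((starRingEnd ℂ) _), mul_assoc _ (C i j), Complex.mul_conj]
  norm_cast

theorem normSq_mem_doublyStochastic {C : Matrix n n ℂ} (hC : C ∈ unitaryGroup n ℂ) :
    of (fun i j => Complex.normSq (C i j)) ∈ doublyStochastic ℝ n := by
  rw [mem_doublyStochastic_iff_sum]
  refine ⟨fun i j => Complex.normSq_nonneg _, fun i => ?_, fun j => ?_⟩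
  · have := congrFun (congrFun (mul_conjTranspose_self_of_mem_unitaryGroup hC) i) i
    simp only [mul_apply, conjTranspose_apply, Complex.star_def, Complex.mul_conj,
      one_apply_eq] at this
    exact_mod_cast this
  · have := congrFun (congrFun (conjTranspose_mul_self_of_mem_unitaryGroup hC) j) j
    simp only [mul_apply, conjTranspose_apply, Complex.star_def, mul_comm _ (C _ j),
      Complex.mul_conj, one_apply_eq] at this
    exact_mod_cast this

theorem exists_perm_sum_mul_le {B : Matrix n n ℝ} (hB : B ∈ doublyStochastic ℝ n)
    (p w : n → ℝ) : ∃ σ : Perm n, ∑ i, p i * w (σ i) ≤ ∑ i, ∑ j, p i * B i j * w j := by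
  let energy : Matrix n n ℝ →ₗ[ℝ] ℝ :=
    { toFun := fun A => p ⬝ᵥ A *ᵥ w
      map_add' := fun A A' => by simp [add_mulVec, dotProduct_add]
      map_smul' := fun c A => by simp [smul_mulVec, dotProduct_smul] }
  rw [← SetLike.mem_coe, doublyStochastic_eq_convexHull_permMatrix] at hB
  obtain ⟨_, ⟨σ, rfl⟩, hσ⟩ :=
    (energy.concaveOn convex_univ).exists_le_of_mem_convexHull (Set.subset_univ _) hB
  refine ⟨σ, ?_⟩
  simpa [energy, permMatrix_mulVec, dotProduct, mulVec, Finset.mul_sum, mul_assoc] using hσ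

theorem sum_sum_mul_sub_of_mem_doublyStochastic {B : Matrix n n ℝ}
    (hB : B ∈ doublyStochastic ℝ n) (p w a : n → ℝ) :
    ∑ i, ∑ j, p i * B i j * (w j - a i) = ∑ i, ∑ j, p i * B i j * w j - ∑ i, p i * a i := by
  simp only [mul_sub, Finset.sum_sub_distrib, mul_right_comm (p _) (B _ _) (a _),
    ← Finset.mul_sum, sum_row_of_mem_doublyStochastic hB, mul_one]

open InformationTheory in
theorem eq_of_sum_mul_log_div_nonpos {B : Matrix n n ℝ} (hB : B ∈ doublyStochastic ℝ n)
    {p r : n → ℝ} (hp : ∀ i, 0 < p i) (hr : ∀ j, 0 < r j) (hpr : ∑ i, p i = ∑ j, r j)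
    (h : ∑ i, ∑ j, p i * B i j * log (p i / r j) ≤ 0) {i j : n} (hij : B i j ≠ 0) :
    p i = r j := by
  have hkl (i j : n) : p i * B i j * log (p i / r j) =
      B i j * r j * klFun (p i / r j) + (p i * B i j - B i j * r j) := by
    have hrj := (hr j).ne'
    rw [klFun]
    field_simp
    ring
  have hmass : ∑ i, ∑ j, (p i * B i j - B i j * r j) = 0 := by
    simp only [Finset.sum_sub_distrib, ← Finset.mul_sum, sum_row_of_mem_doublyStochastic hB,
      mul_one]
    rw [Finset.sum_comm]
    simp only [← Finset.sum_mul, sum_col_of_mem_doublyStochastic hB, one_mul, hpr, sub_self]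
  have hterm (i j : n) : 0 ≤ B i j * r j * klFun (p i / r j) :=
    mul_nonneg (mul_nonneg (nonneg_of_mem_doublyStochastic hB) (hr j).le)
      (klFun_nonneg (div_nonneg (hp i).le (hr j).le))
  simp_rw [hkl, Finset.sum_add_distrib] at h
  rw [hmass, add_zero] at h
  have hzero : B i j * r j * klFun (p i / r j) = 0 :=
    le_antisymm ((Finset.single_le_sum (fun j _ => hterm i j) (Finset.mem_univ j)).trans
      ((Finset.single_le_sum (fun i _ => Finset.sum_nonneg fun j _ => hterm i j)
        (Finset.mem_univ i)).trans h)) (hterm i j)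
  rw [mul_eq_zero, mul_eq_zero, klFun_eq_zero_iff
    (div_nonneg (hp i).le (hr j).le), div_eq_one_iff_eq (hr j).ne'] at hzero
  exact hzero.resolve_left (not_or.2 ⟨hij, (hr j).ne'⟩)

theorem exists_perm_sum_mul_le_re_trace {V Vρ ρ W : Matrix n n ℂ} (hV : V ∈ unitaryGroup n ℂ)
    (hVρ : Vρ ∈ unitaryGroup n ℂ) {p w : n → ℝ}
    (hρ : ρ = Vρ * diagonal (fun i => (p i : ℂ)) * Vρᴴ)
    (hW : W = V * diagonal (fun j => (w j : ℂ)) * Vᴴ) :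
    ∃ σ : Equiv.Perm n, ∑ i, p i * w (σ i) ≤ (trace (ρ * W)).re := by
  rw [hρ, hW, re_trace_conj_diagonal_mul_conj_diagonal]
  exact exists_perm_sum_mul_le (normSq_mem_doublyStochastic
    (Submonoid.mul_mem _ (conjTranspose_mem_unitaryGroup hVρ) hV)) p w

end OneCopy

section CompletePassivity

open Real Equiv

theorem mul_le_mul_of_forall_nat_mul_lt {u u' v v' : ℝ} (hu : 0 ≤ u) (hu' : 0 < u')
    (h : ∀ s t : ℕ, s * u < t * u' → t * v' ≤ s * v) : v' * u ≤ v * u' := by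
  by_contra! hgap
  -- `t / n` is a rational just above `u / u'`
  obtain ⟨n, hn⟩ := exists_nat_gt (u' * |v'| / (v' * u - v * u'))
  rw [div_lt_iff₀ (sub_pos.2 hgap)] at hn
  have hx : 0 ≤ n * u / u' := by positivity
  set t := ⌊n * u / u'⌋₊ + 1
  have ht_lt : n * u < t * u' := by
    have := Nat.lt_floor_add_one (n * u / u')
    rw [div_lt_iff₀ hu'] at this
    exact_mod_cast this
  have ht_le : t * u' ≤ n * u + u' := by
    have := Nat.floor_le hx
    rw [le_div_iff₀ hu'] at this
    push_cast [t]
    linarith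
  have hst := h n t ht_lt
  rcases le_or_gt 0 v' with hv' | hv'
  · rw [abs_of_nonneg hv'] at hn
    nlinarith [mul_le_mul_of_nonneg_right ht_lt.le hv']
  · rw [abs_of_neg hv'] at hn
    nlinarith [mul_le_mul_of_nonpos_right ht_le hv'.le]

theorem sum_comp_swap_mul {α R : Type*} [Fintype α] [DecidableEq α] [CommRing R]
    (f g : α → R) {x y : α} (hxy : x ≠ y) :
    ∑ z, f (swap x y z) * g z = ∑ z, f z * g z + (f x - f y) * (g y - g x) := by
  have key : ∑ z, (f (swap x y z) - f z) * g z = (f y - f x) * g x + (f x - f y) * g y := by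
    rw [Fintype.sum_eq_add x y hxy fun z hz => by
      rw [swap_apply_of_ne_of_ne hz.1 hz.2, sub_self, zero_mul]]
    rw [swap_apply_left, swap_apply_right]
  simp only [sub_mul, Finset.sum_sub_distrib] at key
  linear_combination key

variable {ι : Type*}

theorem sum_prod_mul_sum_eq [Fintype ι] {r : ι → ℝ} (hr : ∑ j, r j = 1)
    (w : ι → ℝ) (m : ℕ) :
    ∑ x : Fin m → ι, (∏ k, r (x k)) * ∑ ℓ, w (x ℓ) = m * ∑ j, r j * w j := by
  have hsite (ℓ : Fin m) : ∑ x : Fin m → ι, (∏ k, r (x k)) * w (x ℓ) = ∑ j, r j * w j := by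
    calc ∑ x : Fin m → ι, (∏ k, r (x k)) * w (x ℓ)
        = ∑ x : Fin m → ι, ∏ k, (if k = ℓ then r * w else r) (x k) := by
          refine Finset.sum_congr rfl fun x _ => ?_
          have hfactor (k : Fin m) : (if k = ℓ then r * w else r) (x k) =
              r (x k) * if k = ℓ then w (x k) else 1 := by
            split_ifs <;> simp
          simp_rw [hfactor, Finset.prod_mul_distrib, Finset.prod_ite_eq']
          simp
      _ = ∏ k, ∑ j, (if k = ℓ then r * w else r) j := (Fintype.prod_sum _).symm
      _ = ∑ j, r j * w j := by
          rw [Fintype.prod_eq_single ℓ fun k hk => by simp [hk, hr]]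
          simp
  simp_rw [Finset.mul_sum]
  rw [Finset.sum_comm]
  simp [hsite, Finset.mul_sum]

/-- Passivity of the diagonal state with populations `r` for every tensor power of the
Hamiltonian with spectrum `w`. -/
def IsCompletelyPassive (r w : ι → ℝ) : Prop :=
  ∀ (m : ℕ) (x y : Fin m → ι), ∑ ℓ, w (x ℓ) < ∑ ℓ, w (y ℓ) → ∏ ℓ, r (y ℓ) ≤ ∏ ℓ, r (x ℓ)

theorem isCompletelyPassive_of_forall_perm [Fintype ι] [DecidableEq ι] {r w : ι → ℝ}
    (hr : ∑ j, r j = 1)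
    (h : ∀ m : ℕ, 1 ≤ m → ∀ e : Perm (Fin m → ι),
      m * ∑ j, r j * w j ≤ ∑ x, (∏ k, r (e x k)) * ∑ ℓ, w (x ℓ)) :
    IsCompletelyPassive r w := by
  intro m x y hxy
  have hm : 1 ≤ m := by
    rcases m with _ | m
    · simp at hxy
    · omega
  have hxy' : x ≠ y := by
    rintro rfl
    exact lt_irrefl _ hxy
  have hswap := sum_comp_swap_mul (fun u : Fin m → ι => ∏ k, r (u k)) (fun u => ∑ ℓ, w (u ℓ)) hxy'
  have := h m hm (swap x y)
  rw [hswap, sum_prod_mul_sum_eq hr] at this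
  nlinarith

namespace IsCompletelyPassive

variable {r w : ι → ℝ}

theorem mul_log_sub_le (h : IsCompletelyPassive r w) (hr : ∀ j, 0 < r j) {s t : ℕ}
    {j k j' k' : ι} (hlt : s * (w k - w j) < t * (w k' - w j')) :
    t * (log (r k') - log (r j')) ≤ s * (log (r k) - log (r j)) := by
  -- compare the words `k^s j'^t` and `j^s k'^t`
  have hword (f : ι → ℝ) (a b : ι) :
      ∑ ℓ, f (Fin.append (fun _ : Fin s => a) (fun _ : Fin t => b) ℓ) = s * f a + t * f b := by
    simp [Fin.sum_univ_add]
  have hprod (a b : ι) :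
      ∏ ℓ, r (Fin.append (fun _ : Fin s => a) (fun _ : Fin t => b) ℓ) = r a ^ s * r b ^ t := by
    simp [Fin.prod_univ_add]
  have hpass := h (s + t) (Fin.append (fun _ => k) (fun _ => j'))
    (Fin.append (fun _ => j) (fun _ => k')) (by rw [hword, hword]; linarith)
  rw [hprod, hprod] at hpass
  have hpow (a : ι) (n : ℕ) : 0 < r a ^ n := pow_pos (hr a) n
  have hlog := log_le_log (mul_pos (hpow _ _) (hpow _ _)) hpass
  rw [log_mul (hpow _ _).ne' (hpow _ _).ne', log_mul (hpow _ _).ne' (hpow _ _).ne',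
    log_pow, log_pow, log_pow, log_pow] at hlog
  linarith

theorem log_slope_le (h : IsCompletelyPassive r w) (hr : ∀ j, 0 < r j) {j k j' k' : ι}
    (hjk : w j ≤ w k) (hjk' : w j' < w k') :
    (log (r k') - log (r j')) * (w k - w j) ≤ (log (r k) - log (r j)) * (w k' - w j') :=
  mul_le_mul_of_forall_nat_mul_lt (sub_nonneg.2 hjk) (sub_pos.2 hjk') fun _ _ hst =>
    h.mul_log_sub_le hr hst

theorem exists_log_eq [Finite ι] (h : IsCompletelyPassive r w) (hr : ∀ j, 0 < r j)
    (hw : ∃ j k, w j ≠ w k) : ∃ β c : ℝ, 0 ≤ β ∧ ∀ j, log (r j) = c - β * w j := by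
  have : Nonempty ι := let ⟨j, _⟩ := hw; ⟨j⟩
  obtain ⟨i₀, hi₀⟩ := Finite.exists_min w
  obtain ⟨i₁, hi₁⟩ : ∃ i₁, w i₀ < w i₁ := by
    obtain ⟨j, k, hjk⟩ := hw
    by_contra! H
    exact hjk ((le_antisymm (H j) (hi₀ j)).trans (le_antisymm (H k) (hi₀ k)).symm)
  have hD : 0 < w i₁ - w i₀ := sub_pos.2 hi₁
  have hG : log (r i₁) - log (r i₀) ≤ 0 := by
    simpa using h.mul_log_sub_le hr (s := 0) (t := 1) (j := i₀) (k := i₀) (by simpa using hi₁)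
  refine ⟨-(log (r i₁) - log (r i₀)) / (w i₁ - w i₀),
    log (r i₀) - (log (r i₁) - log (r i₀)) / (w i₁ - w i₀) * w i₀,
    div_nonneg (neg_nonneg.2 hG) hD.le, fun j => ?_⟩
  have hlower := h.log_slope_le hr (hi₀ j) hi₁
  have hupper : (log (r j) - log (r i₀)) * (w i₁ - w i₀) ≤
      (log (r i₁) - log (r i₀)) * (w j - w i₀) := by
    rcases (hi₀ j).lt_or_eq with hlt | heq
    · exact h.log_slope_le hr hi₁.le hlt
    · have := h.log_slope_le hr heq.ge hi₁
      rw [heq, sub_self, mul_zero] at this ⊢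
      linarith
  field_simp
  linarith

end IsCompletelyPassive

section Populations

variable [Fintype ι] {p w : ι → ℝ} {T : ℝ}

theorem le_sum_mul_perm_of_forall_perm
    (h : ∀ m : ℕ, 1 ≤ m → ∀ e : Perm (Fin m → ι),
      m * T ≤ ∑ x, (∏ k, p (e x k)) * ∑ ℓ, w (x ℓ)) (σ : Perm ι) :
    T ≤ ∑ i, p i * w (σ i) := by
  have h1 := h 1 le_rfl (arrowCongr (Equiv.refl _) σ.symm)
  rw [← (Equiv.funUnique (Fin 1) ι).symm.sum_comp, ← Equiv.sum_comp σ] at h1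
  simpa using h1

theorem exists_log_eq_of_forall_perm [DecidableEq ι] (hp : ∀ i, 0 < p i) (hp1 : ∑ i, p i = 1)
    (hw : ∃ j k, w j ≠ w k)
    (h : ∀ m : ℕ, 1 ≤ m → ∀ e : Perm (Fin m → ι),
      m * T ≤ ∑ x, (∏ k, p (e x k)) * ∑ ℓ, w (x ℓ))
    {σ : Perm ι} (hσ : ∑ i, p i * w (σ i) ≤ T) :
    ∃ β c : ℝ, 0 ≤ β ∧ ∀ i, log (p i) = c - β * w (σ i) := by
  have hrw : ∑ j, p (σ.symm j) * w j = ∑ i, p i * w (σ i) := by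
    rw [← Equiv.sum_comp σ]
    simp
  have hpassive : IsCompletelyPassive (p ∘ σ.symm) w := by
    refine isCompletelyPassive_of_forall_perm ((Equiv.sum_comp σ.symm p).trans hp1)
      fun m hm e => ?_
    calc m * ∑ j, (p ∘ σ.symm) j * w j ≤ m * T := by
          simp only [Function.comp_apply, hrw]
          gcongr
      _ ≤ _ := h m hm (e.trans (arrowCongr (Equiv.refl _) σ.symm))
  obtain ⟨β, c, hβ, hlog⟩ := hpassive.exists_log_eq (fun j => hp _) hw
  exact ⟨β, c, hβ, fun i => by simpa using hlog (σ i)⟩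

end Populations

end CompletePassivity

section Thermal

open Equiv Real

variable {n : Type*} [Fintype n] [DecidableEq n] {V Vρ : Matrix n n ℂ}

theorem conj_diagonal_eq_conj_diagonal (hV : V ∈ unitaryGroup n ℂ)
    (hVρ : Vρ ∈ unitaryGroup n ℂ) {p r : n → ℂ} (h : ∀ i j, (Vρᴴ * V) i j ≠ 0 → p i = r j) :
    Vρ * diagonal p * Vρᴴ = V * diagonal r * Vᴴ := by
  have hcomm : diagonal p * (Vρᴴ * V) = (Vρᴴ * V) * diagonal r := by
    ext i j
    rw [diagonal_mul, mul_diagonal]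
    by_cases hij : (Vρᴴ * V) i j = 0
    · simp [hij]
    · rw [h i j hij, mul_comm]
  calc Vρ * diagonal p * Vρᴴ = Vρ * (diagonal p * (Vρᴴ * V)) * Vᴴ := by
        simp only [mul_assoc, mul_conjTranspose_self_of_mem_unitaryGroup hV, mul_one]
    _ = V * diagonal r * Vᴴ := by
        rw [hcomm, ← mul_assoc, ← mul_assoc, mul_conjTranspose_self_of_mem_unitaryGroup hVρ,
          one_mul]

theorem matExp_conj_diagonal (hV : V ∈ unitaryGroup n ℂ) (v : n → ℂ) :
    matExp (V * diagonal v * Vᴴ) = V * diagonal (fun i => Complex.exp (v i)) * Vᴴ := by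
  have hmatExp (A : Matrix n n ℂ) : matExp A = NormedSpace.exp A := by
    rw [NormedSpace.exp_eq_tsum ℂ]
    rfl
  have hVinv : Vᴴ = V⁻¹ :=
    (inv_eq_left_inv (conjTranspose_mul_self_of_mem_unitaryGroup hV)).symm
  have hexp : NormedSpace.exp v = fun i => Complex.exp (v i) := by
    funext i
    rw [Pi.exp_def, Complex.exp_eq_exp_ℂ]
  rw [hmatExp, hVinv, Matrix.exp_conj V _ ⟨Unitary.toUnits ⟨V, hV⟩, rfl⟩, Matrix.exp_diagonal,
    hexp]

theorem inv_trace_smul_matExp_eq (hV : V ∈ unitaryGroup n ℂ) {W : Matrix n n ℂ} {w : n → ℝ}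
    (hW : W = V * diagonal (fun j => (w j : ℂ)) * Vᴴ) {β c : ℝ}
    (hsum : ∑ j, exp (c - β * w j) = 1) :
    (trace (matExp (-(β : ℂ) • W)))⁻¹ • matExp (-(β : ℂ) • W) =
      V * diagonal (fun j => (exp (c - β * w j) : ℂ)) * Vᴴ := by
  have hexp : matExp (-(β : ℂ) • W) = V * diagonal (fun j => (exp (-β * w j) : ℂ)) * Vᴴ := by
    have hdiag : (-(β : ℂ)) • (fun j => (w j : ℂ)) = fun j => ((-β * w j : ℝ) : ℂ) := by
      funext j
      simp
    rw [hW, ← smul_mul, ← Matrix.mul_smul, ← diagonal_smul, hdiag, matExp_conj_diagonal hV]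
    simp_rw [← Complex.ofReal_exp]
  have hZ : ∑ j, exp (-β * w j) = (exp c)⁻¹ := by
    refine eq_inv_of_mul_eq_one_left ?_
    rw [← hsum, Finset.sum_mul]
    refine Finset.sum_congr rfl fun j _ => ?_
    rw [← exp_add]
    ring_nf
  have htrace : trace (matExp (-(β : ℂ) • W)) = (exp c)⁻¹ := by
    rw [hexp, trace_mul_cycle, conjTranspose_mul_self_of_mem_unitaryGroup hV, one_mul,
      trace_diagonal]
    exact_mod_cast hZ
  have hdiag : ((exp c : ℝ) : ℂ) • (fun j => (exp (-β * w j) : ℂ)) =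
      fun j => (exp (c - β * w j) : ℂ) := by
    funext j
    rw [Pi.smul_apply, smul_eq_mul, ← Complex.ofReal_mul, ← exp_add]
    ring_nf
  rw [htrace, hexp, Complex.ofReal_inv, inv_inv, ← Matrix.smul_mul, ← Matrix.mul_smul,
    ← diagonal_smul, hdiag]

theorem eq_thermal_of_log_eq {ρ W : Matrix n n ℂ}
    (hV : V ∈ unitaryGroup n ℂ) (hVρ : Vρ ∈ unitaryGroup n ℂ) {p w : n → ℝ}
    (hρ : ρ = Vρ * diagonal (fun i => (p i : ℂ)) * Vρᴴ)
    (hW : W = V * diagonal (fun j => (w j : ℂ)) * Vᴴ) (hp : ∀ i, 0 < p i) (hp1 : ∑ i, p i = 1)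
    {σ : Perm n} {β c : ℝ} (hβ : 0 ≤ β) (hlog : ∀ i, log (p i) = c - β * w (σ i))
    (hT : (trace (ρ * W)).re ≤ ∑ i, p i * w (σ i)) :
    ρ = (trace (matExp (-(β : ℂ) • W)))⁻¹ • matExp (-(β : ℂ) • W) := by
  set r : n → ℝ := fun j => exp (c - β * w j)
  have hpr (i : n) : p i = r (σ i) := by rw [← exp_log (hp i), hlog]
  have hsum : ∑ j, r j = ∑ i, p i := by
    rw [← Equiv.sum_comp σ r]
    simp [hpr]
  have hB := normSq_mem_doublyStochastic
    (Submonoid.mul_mem _ (conjTranspose_mem_unitaryGroup hVρ) hV)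
  have hlogdiv (i j : n) : log (p i / r j) = β * (w j - w (σ i)) := by
    rw [log_div (hp i).ne' (exp_pos _).ne', hlog, log_exp]
    ring
  have hrel : ∑ i, ∑ j, p i * Complex.normSq ((Vρᴴ * V) i j) * log (p i / r j) ≤ 0 := by
    rw [hρ, hW, re_trace_conj_diagonal_mul_conj_diagonal] at hT
    simp_rw [hlogdiv, mul_left_comm _ β, ← Finset.mul_sum]
    have hcoupling := sum_sum_mul_sub_of_mem_doublyStochastic hB p w (w ∘ σ)
    simp only [of_apply, Function.comp_apply] at hcoupling
    rw [hcoupling]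
    exact mul_nonpos_of_nonneg_of_nonpos hβ (sub_nonpos.2 hT)
  rw [inv_trace_smul_matExp_eq hV hW (hsum.trans hp1), hρ]
  refine conj_diagonal_eq_conj_diagonal hV hVρ fun i j hij => ?_
  have := eq_of_sum_mul_log_div_nonpos hB hp (fun j => exp_pos _) hsum.symm hrel
    (i := i) (j := j) (by simpa using hij)
  exact_mod_cast this

end Thermal

/-- From sufficiently many copies of any full-rank state that
is not a thermal state of the payoff observable `W` (for any `β ≥ 0`), a
nonzero amount of chemical work can be extracted by some unitary. -/
theorem work_extractable_of_not_NATS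
    {d : ℕ} (W : Matrix (Fin d) (Fin d) ℂ) (hW : W.IsHermitian)
    (hWscalar : ¬ ∃ r : ℝ, W = (r : ℂ) • 1)
    (ρ : Matrix (Fin d) (Fin d) ℂ) (hρ : ρ.PosDef) (hρ1 : ρ.trace = 1)
    (hρne : ∀ β : ℝ, 0 ≤ β →
      ρ ≠ (Matrix.trace (matExp (-(β : ℂ) • W)))⁻¹ • matExp (-(β : ℂ) • W)) :
    ∃ m : ℕ, 1 ≤ m ∧
      ∃ U : Matrix (Fin m → Fin d) (Fin m → Fin d) ℂ,
        U ∈ Matrix.unitaryGroup (Fin m → Fin d) ℂ ∧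
        (Matrix.trace (U * tensorPow ρ m * Uᴴ * ∑ ℓ : Fin m, siteOp W m ℓ)).re <
          (Matrix.trace (tensorPow ρ m * ∑ ℓ : Fin m, siteOp W m ℓ)).re := by
  by_contra! hnowork
  have hV := hW.eigenvectorUnitary.2
  have hVρ := hρ.1.eigenvectorUnitary.2
  have hp1 : ∑ i, hρ.1.eigenvalues i = 1 := by
    apply Complex.ofReal_injective
    simpa [hρ1] using hρ.1.trace_eq_sum_eigenvalues.symm
  have hdiag (m : ℕ) (hm : 1 ≤ m) :=
    mul_re_trace_le_sum_of_forall_unitary hV hVρ hρ.1.eq_conj_diagonal hW.eq_conj_diagonal hρ1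
      (hnowork m hm)
  obtain ⟨σ, hσ⟩ := exists_perm_sum_mul_le_re_trace hV hVρ hρ.1.eq_conj_diagonal
    hW.eq_conj_diagonal
  obtain ⟨β, c, hβ, hlog⟩ := exists_log_eq_of_forall_perm hρ.eigenvalues_pos hp1
    (hW.exists_eigenvalues_ne hWscalar) hdiag hσ
  exact hρne β hβ (eq_thermal_of_log_eq hV hVρ hρ.1.eq_conj_diagonal hW.eq_conj_diagonal
    hρ.eigenvalues_pos hp1 hβ hlog (le_sum_mul_perm_of_forall_perm hdiag σ))
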